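/- arXiv:2202.07030 — 2 statements merged into one kernel-verified Lean document; each statement's English description precedes it below -/
import Mathlib

section
/- (Uniform lower bound along sequences.) Let 1 ≤ p < n, let Ω ⊆ ℝⁿ be a bounded open set, let u_k (k ∈ ℕ) and u_0 be C¹ functions ℝⁿ → ℝ with compact support contained in Ω, and assume u_0 ≠ 0. Assume sup_k ∫_Ω |∇u_k(x)|^p dx < ∞ and that for every ξ ∈ S^{n−1}, Ψ_ξ(u_0) ≤ liminf_{k→∞} Ψ_ξ(u_k). Then there exist a constant c_0 > 0 and an integer k_0 ≥ 1, both independent of ξ, such that Ψ_ξ(u_k) ≥ c_0 for all k ≥ k_0 and all ξ ∈ S^{n−1}. -/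
/-! The map `ξ ↦ Ψ_ξ(v)` is Lipschitz on the sphere with constant `p ∫_Ω |∇v|^p`, because
`t ↦ t^p` is Lipschitz on bounded intervals; so the `Ψ(u_k)` are uniformly Lipschitz and
`Ψ(u₀)` is continuous. A nonzero compactly supported `u₀` cannot be constant along any line,
so `Ψ_ξ(u₀) > 0` for every `ξ`, and by compactness `Ψ(u₀) ≥ m > 0` on the sphere. On a finite
`δ`-net the liminf hypothesis gives `Ψ(u_k) > m/2` for large `k`, and the uniform Lipschitz
bound spreads this to `Ψ(u_k) ≥ m/4` on the whole sphere. -/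

open MeasureTheory Metric Filter
open scoped ENNReal RealInnerProductSpace NNReal

noncomputable section

/-- Euclidean n-space `ℝⁿ`. -/
abbrev En (n : ℕ) : Type := EuclideanSpace ℝ (Fin n)

/-- The unit sphere `S^{n-1}` of `ℝⁿ`. -/
abbrev unitSphere (n : ℕ) := Metric.sphere (0 : En n) 1

/-- The surface measure `σ` on the unit sphere, with `σ(S^{n-1}) = n ω_n`. -/
def sphereMeasure (n : ℕ) : Measure (unitSphere n) :=
  (volume : Measure (En n)).toSphere

/-- `n ω_n`, where `ω_n` is the volume of the unit Euclidean ball of `ℝⁿ`. -/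
def nOmega (n : ℕ) : ℝ := (n : ℝ) * (volume (Metric.ball (0 : En n) 1)).toReal

/-- The directional energy `Ψ_ξ(u) = ∫_Ω |∇u(x)·ξ|^p dx`. -/
def Psi (n : ℕ) (p : ℝ) (Ω : Set (En n)) (u : En n → ℝ) (ξ : unitSphere n) : ℝ :=
  ∫ x in Ω, |fderiv ℝ u x (ξ : En n)| ^ p

/-- The normalizing constant `α_{n,p}` relative to a chosen unit vector `e₁`. -/
def alphanp (n : ℕ) (p : ℝ) (e₁ : En n) : ℝ :=
  nOmega n ^ (((n : ℝ) + p) / ((n : ℝ) * p)) *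
    (∫ ξ, |⟪e₁, (ξ : En n)⟫| ^ p ∂(sphereMeasure n)) ^ (-(1 / p))

/-- The affine `L^p` energy `E_{p,Ω}(u)`; the conventions `0^{-n/p} = +∞`
and `(+∞)^{-1/n} = 0` are built into `ENNReal.rpow`. -/
def affineEnergy (n : ℕ) (p : ℝ) (e₁ : En n) (Ω : Set (En n)) (u : En n → ℝ) : ℝ :=
  alphanp n p e₁ *
    ((∫⁻ ξ, ENNReal.ofReal (Psi n p Ω u ξ) ^ (-((n : ℝ) / p)) ∂(sphereMeasure n)) ^
      (-(1 / (n : ℝ)))).toReal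

section Pointwise

variable {p : ℝ}

theorem abs_rpow_sub_rpow_le_of_mem_Icc (hp : 1 ≤ p) {a b R : ℝ} (ha : a ∈ Set.Icc 0 R)
    (hb : b ∈ Set.Icc 0 R) : |a ^ p - b ^ p| ≤ p * R ^ (p - 1) * |a - b| := by
  have hderiv : ∀ t ∈ Set.Icc 0 R, HasDerivAt (fun t : ℝ => t ^ p) (p * t ^ (p - 1)) t :=
    fun t _ => Real.hasDerivAt_rpow_const (Or.inr hp)
  refine (convex_Icc 0 R).norm_image_sub_le_of_norm_deriv_le
    (fun t ht => (hderiv t ht).differentiableAt) (fun t ht => ?_) hb ha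
  rw [(hderiv t ht).deriv, Real.norm_eq_abs,
    abs_of_nonneg (mul_nonneg (by linarith) (Real.rpow_nonneg ht.1 _))]
  exact mul_le_mul_of_nonneg_left (Real.rpow_le_rpow ht.1 ht.2 (by linarith)) (by linarith)

theorem abs_abs_apply_rpow_sub_le {E : Type*} [SeminormedAddCommGroup E] [NormedSpace ℝ E]
    (hp : 1 ≤ p) (L : E →L[ℝ] ℝ) {ξ η : E} (hξ : ‖ξ‖ ≤ 1) (hη : ‖η‖ ≤ 1) :
    |(|L ξ| ^ p - |L η| ^ p)| ≤ p * ‖L‖ ^ p * ‖ξ - η‖ := by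
  have hmem : ∀ ζ : E, ‖ζ‖ ≤ 1 → |L ζ| ∈ Set.Icc 0 ‖L‖ := fun ζ hζ =>
    ⟨abs_nonneg _, (L.le_opNorm ζ).trans (mul_le_of_le_one_right (norm_nonneg L) hζ)⟩
  calc |(|L ξ| ^ p - |L η| ^ p)|
      ≤ p * ‖L‖ ^ (p - 1) * |(|L ξ| - |L η|)| :=
        abs_rpow_sub_rpow_le_of_mem_Icc hp (hmem ξ hξ) (hmem η hη)
    _ ≤ p * ‖L‖ ^ (p - 1) * (‖L‖ * ‖ξ - η‖) := by
        gcongr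
        calc |(|L ξ| - |L η|)| ≤ |L ξ - L η| := abs_abs_sub_abs_le_abs_sub _ _
          _ = ‖L (ξ - η)‖ := by rw [map_sub, Real.norm_eq_abs]
          _ ≤ ‖L‖ * ‖ξ - η‖ := L.le_opNorm _
    _ = p * ‖L‖ ^ p * ‖ξ - η‖ := by
        rw [← mul_assoc, mul_assoc p, ← Real.rpow_add_one' (norm_nonneg L) (by linarith),
          sub_add_cancel]

end Pointwise

section DirectionalEnergy

variable {E : Type*} [NormedAddCommGroup E] [NormedSpace ℝ E] {p : ℝ} {v : E → ℝ}

theorem continuous_abs_fderiv_apply_rpow (hp : 0 < p) (hv : ContDiff ℝ 1 v) (ξ : E) :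
    Continuous fun x => |fderiv ℝ v x ξ| ^ p :=
  (((hv.continuous_fderiv one_ne_zero).clm_apply continuous_const).abs).rpow_const
    fun _ => Or.inr hp.le

theorem eq_zero_of_forall_fderiv_apply_eq_zero {F : Type*} [NormedAddCommGroup F]
    [NormedSpace ℝ F] {w : E → F} (hw : Differentiable ℝ w) (hcs : HasCompactSupport w) {ξ : E}
    (hξ : ξ ≠ 0) (h : ∀ x, fderiv ℝ w x ξ = 0) : w = 0 := by
  funext x
  -- `w` is constant along the ray `x + t • ξ`, which leaves every compact set.
  have hline : ∀ t : ℝ, HasDerivAt (fun t : ℝ => w (x + t • ξ)) 0 t := fun t => by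
    simpa [h, Function.comp_def] using (hw _).hasFDerivAt.comp_hasDerivAt t
      (((hasDerivAt_id t).smul_const ξ).const_add x)
  have hconst : (fun t : ℝ => w (x + t • ξ)) = fun _ => w x := funext fun t => by
    simpa using is_const_of_deriv_eq_zero (fun t => (hline t).differentiableAt)
      (fun t => (hline t).deriv) t 0
  have hescape : Tendsto (fun t : ℝ => x + t • ξ) atTop (Bornology.cobounded E) := by
    refine tendsto_norm_atTop_iff_cobounded.1 (tendsto_atTop_mono (fun t => ?_) <|
      tendsto_atTop_add_const_right _ (-‖x‖) <| tendsto_id.atTop_mul_const (norm_pos_iff.2 hξ))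
    have htri := norm_add_le (x + t • ξ) (-x)
    rw [add_neg_cancel_comm, norm_neg, norm_smul, Real.norm_eq_abs] at htri
    have := mul_le_mul_of_nonneg_right (le_abs_self t) (norm_nonneg ξ)
    rw [id]
    linarith
  have := hcs.is_zero_at_infty.comp (hescape.mono_right Metric.cobounded_le_cocompact)
  rw [Function.comp_def, hconst] at this
  exact tendsto_nhds_unique tendsto_const_nhds this

variable [MeasurableSpace E] [BorelSpace E] {μ : Measure E} [IsFiniteMeasureOnCompacts μ]

theorem integrable_abs_fderiv_apply_rpow (hp : 0 < p) (hv : ContDiff ℝ 1 v)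
    (hcs : HasCompactSupport v) (ξ : E) : Integrable (fun x => |fderiv ℝ v x ξ| ^ p) μ :=
  (continuous_abs_fderiv_apply_rpow hp hv ξ).integrable_of_hasCompactSupport <|
    (hcs.fderiv_apply ℝ ξ).comp_left (g := fun t : ℝ => |t| ^ p) (by simp [hp.ne'])

theorem integrable_norm_fderiv_rpow (hp : 0 < p) (hv : ContDiff ℝ 1 v)
    (hcs : HasCompactSupport v) : Integrable (fun x => ‖fderiv ℝ v x‖ ^ p) μ :=
  (((hv.continuous_fderiv one_ne_zero).norm).rpow_const fun _ => Or.inr hp.le)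
    |>.integrable_of_hasCompactSupport <|
    (hcs.fderiv ℝ).comp_left (g := fun L : E →L[ℝ] ℝ => ‖L‖ ^ p) (by simp [hp.ne'])

theorem abs_setIntegral_abs_fderiv_apply_rpow_sub_le (hp : 1 ≤ p) (hv : ContDiff ℝ 1 v)
    (hcs : HasCompactSupport v) (Ω : Set E) {ξ η : E} (hξ : ‖ξ‖ ≤ 1) (hη : ‖η‖ ≤ 1) :
    |(∫ x in Ω, |fderiv ℝ v x ξ| ^ p ∂μ) - ∫ x in Ω, |fderiv ℝ v x η| ^ p ∂μ|
      ≤ p * (∫ x in Ω, ‖fderiv ℝ v x‖ ^ p ∂μ) * ‖ξ - η‖ := by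
  have hp0 : 0 < p := by linarith
  have hξi := (integrable_abs_fderiv_apply_rpow (μ := μ) hp0 hv hcs ξ).integrableOn (s := Ω)
  have hηi := (integrable_abs_fderiv_apply_rpow (μ := μ) hp0 hv hcs η).integrableOn (s := Ω)
  calc |(∫ x in Ω, |fderiv ℝ v x ξ| ^ p ∂μ) - ∫ x in Ω, |fderiv ℝ v x η| ^ p ∂μ|
      = ‖∫ x in Ω, (|fderiv ℝ v x ξ| ^ p - |fderiv ℝ v x η| ^ p) ∂μ‖ := by
        rw [integral_sub hξi hηi, Real.norm_eq_abs]
    _ ≤ ∫ x in Ω, p * ‖ξ - η‖ * ‖fderiv ℝ v x‖ ^ p ∂μ := by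
        refine norm_integral_le_of_norm_le
          ((integrable_norm_fderiv_rpow hp0 hv hcs).integrableOn.const_mul _) (.of_forall ?_)
        intro x
        rw [Real.norm_eq_abs, mul_right_comm]
        exact abs_abs_apply_rpow_sub_le hp _ hξ hη
    _ = p * (∫ x in Ω, ‖fderiv ℝ v x‖ ^ p ∂μ) * ‖ξ - η‖ := by
        rw [integral_const_mul]; ring

theorem setIntegral_abs_fderiv_apply_rpow_pos [μ.IsOpenPosMeasure] (hp : 0 < p)
    (hv : ContDiff ℝ 1 v) (hcs : HasCompactSupport v) {Ω : Set E} (hsupp : tsupport v ⊆ Ω)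
    (hne : v ≠ 0) {ξ : E} (hξ : ξ ≠ 0) : 0 < ∫ x in Ω, |fderiv ℝ v x ξ| ^ p ∂μ := by
  obtain ⟨x, hx⟩ : ∃ x, fderiv ℝ v x ξ ≠ 0 := by
    by_contra! h
    exact hne (eq_zero_of_forall_fderiv_apply_eq_zero (hv.differentiable one_ne_zero) hcs hξ h)
  rw [setIntegral_eq_integral_of_forall_compl_eq_zero fun y hy => by
    simp [fderiv_of_notMem_tsupport ℝ (fun h => hy (hsupp h)), hp.ne']]
  exact integral_pos_of_integrable_nonneg_nonzero (continuous_abs_fderiv_apply_rpow hp hv ξ)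
    (integrable_abs_fderiv_apply_rpow hp hv hcs ξ) (fun y => by positivity)
    (by positivity)

end DirectionalEnergy

theorem exists_pos_eventually_le_of_lipschitzWith {X ι : Type*} [PseudoMetricSpace X]
    [CompactSpace X] {l : Filter ι} {f₀ : X → ℝ} {f : ι → X → ℝ} {L : ℝ≥0}
    (hf₀ : Continuous f₀) (hpos : ∀ x, 0 < f₀ x) (hf : ∀ i, LipschitzWith L (f i))
    (hbdd : ∀ x, IsBoundedUnder (· ≥ ·) l fun i => f i x)
    (hlim : ∀ x, f₀ x ≤ l.liminf fun i => f i x) :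
    ∃ c > 0, ∀ᶠ i in l, ∀ x, c ≤ f i x := by
  obtain ⟨m, hm, hm_le⟩ := isCompact_univ.exists_forall_le' hf₀.continuousOn fun x _ => hpos x
  set δ := m / (4 * (L + 1)) with hδ
  obtain ⟨t, -, htf, hcover⟩ :=
    (isCompact_univ (X := X)).finite_cover_balls (e := δ) (by positivity)
  have hnet : ∀ᶠ i in l, ∀ y ∈ t, m / 2 < f i y :=
    htf.eventually_all.2 fun y _ => eventually_lt_of_lt_liminf
      (by linarith [hm_le y trivial, hlim y]) (hbdd y)
  refine ⟨m / 4, by positivity, hnet.mono fun i hi x => ?_⟩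
  obtain ⟨y, hyt, hxy⟩ := Set.mem_iUnion₂.1 (hcover (Set.mem_univ x))
  have hclose : dist (f i x) (f i y) ≤ L * δ :=
    ((hf i).dist_le_mul x y).trans (by gcongr; exact (mem_ball.1 hxy).le)
  have hLδ : (L : ℝ) * δ ≤ m / 4 := by
    rw [hδ, mul_div_assoc', div_le_div_iff₀ (by positivity) (by positivity)]
    nlinarith
  linarith [(abs_le.1 (Real.dist_eq _ _ ▸ hclose)).1, hi y hyt]

theorem Psi_nonneg {n : ℕ} {p : ℝ} {Ω : Set (En n)} {v : En n → ℝ} (ξ : unitSphere n) :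
    0 ≤ Psi n p Ω v ξ :=
  integral_nonneg fun _ => by positivity

theorem lipschitzWith_Psi {n : ℕ} {p : ℝ} (hp : 1 ≤ p) {Ω : Set (En n)} {v : En n → ℝ}
    (hv : ContDiff ℝ 1 v) (hcs : HasCompactSupport v) {M : ℝ}
    (hM : ∫ x in Ω, ‖fderiv ℝ v x‖ ^ p ≤ M) : LipschitzWith (p * M).toNNReal (Psi n p Ω v) :=
  LipschitzWith.of_dist_le' fun ξ η => by
    rw [Real.dist_eq, Subtype.dist_eq, dist_eq_norm]
    refine (abs_setIntegral_abs_fderiv_apply_rpow_sub_le hp hv hcs Ω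
      (norm_eq_of_mem_sphere ξ).le (norm_eq_of_mem_sphere η).le).trans ?_
    gcongr

theorem statement4_general (n : ℕ) (p : ℝ) (hp : 1 ≤ p)
    (Ω : Set (En n))
    (u : ℕ → En n → ℝ) (u₀ : En n → ℝ)
    (hu : ∀ k, ContDiff ℝ 1 (u k)) (hcs : ∀ k, HasCompactSupport (u k))
    (hu₀ : ContDiff ℝ 1 u₀) (hcs₀ : HasCompactSupport u₀) (hsupp₀ : tsupport u₀ ⊆ Ω)
    (hne : u₀ ≠ 0)
    (C : ℝ) (hbd : ∀ k, (∫ x in Ω, ‖fderiv ℝ (u k) x‖ ^ p) ≤ C)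
    (hlin : ∀ ξ : unitSphere n,
      Psi n p Ω u₀ ξ ≤ atTop.liminf (fun k => Psi n p Ω (u k) ξ)) :
    ∃ c₀ : ℝ, 0 < c₀ ∧ ∃ k₀ : ℕ, 1 ≤ k₀ ∧
      ∀ k, k₀ ≤ k → ∀ ξ : unitSphere n, c₀ ≤ Psi n p Ω (u k) ξ := by
  have hpos : ∀ ξ : unitSphere n, 0 < Psi n p Ω u₀ ξ := fun ξ =>
    setIntegral_abs_fderiv_apply_rpow_pos (by linarith) hu₀ hcs₀ hsupp₀ hne
      (ne_zero_of_mem_unit_sphere ξ)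
  obtain ⟨c₀, hc₀, hev⟩ := exists_pos_eventually_le_of_lipschitzWith
    (lipschitzWith_Psi hp hu₀ hcs₀ le_rfl).continuous hpos
    (fun k => lipschitzWith_Psi hp (hu k) (hcs k) (hbd k))
    (fun ξ => isBoundedUnder_of ⟨0, fun k => Psi_nonneg ξ⟩) hlin
  obtain ⟨k₁, hk₁⟩ := eventually_atTop.1 hev
  exact ⟨c₀, hc₀, max k₁ 1, le_max_right _ _, fun k hk => hk₁ k (le_of_max_le_left hk)⟩

/-- Uniform lower bound along sequences: if `u₀ ≠ 0`, the gradients of `u_k` are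
bounded in `L^p(Ω)` and `Ψ_ξ(u₀) ≤ liminf_k Ψ_ξ(u_k)` for every direction `ξ`, then
there are `c₀ > 0` and an integer `k₀ ≥ 1`, both independent of `ξ`, with
`Ψ_ξ(u_k) ≥ c₀` for all `k ≥ k₀` and all `ξ ∈ S^{n-1}`. -/
theorem statement4 (n : ℕ) (hn : 2 ≤ n) (p : ℝ) (hp : 1 ≤ p) (hpn : p < n)
    (Ω : Set (En n)) (hΩo : IsOpen Ω) (hΩb : Bornology.IsBounded Ω)
    (u : ℕ → En n → ℝ) (u₀ : En n → ℝ)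
    (hu : ∀ k, ContDiff ℝ 1 (u k)) (hcs : ∀ k, HasCompactSupport (u k))
    (hsupp : ∀ k, tsupport (u k) ⊆ Ω)
    (hu₀ : ContDiff ℝ 1 u₀) (hcs₀ : HasCompactSupport u₀) (hsupp₀ : tsupport u₀ ⊆ Ω)
    (hne : u₀ ≠ 0)
    (C : ℝ) (hbd : ∀ k, (∫ x in Ω, ‖fderiv ℝ (u k) x‖ ^ p) ≤ C)
    (hlin : ∀ ξ : unitSphere n,
      Psi n p Ω u₀ ξ ≤ atTop.liminf (fun k => Psi n p Ω (u k) ξ)) :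
    ∃ c₀ : ℝ, 0 < c₀ ∧ ∃ k₀ : ℕ, 1 ≤ k₀ ∧
      ∀ k, k₀ ≤ k → ∀ ξ : unitSphere n, c₀ ≤ Psi n p Ω (u k) ξ :=
  statement4_general n p hp Ω u u₀ hu hcs hu₀ hcs₀ hsupp₀ hne C hbd hlin
end
end

section
/- (Superadditivity of the affine energy under truncation, Proposition 5.) Let 1 ≤ p < n, let Ω ⊆ ℝⁿ be a bounded open set, let u : ℝⁿ → ℝ be a C¹ function with compact support contained in Ω, and let h > 0. For ξ ∈ S^{n−1} set A_ξ = ∫_{Ω ∩ {|u| ≤ h}} |∇u(x)·ξ|^p dx and B_ξ = ∫_{Ω ∩ {|u| > h}} |∇u(x)·ξ|^p dx (these are the energies Ψ_ξ(T_h u) and Ψ_ξ(R_h u) of the truncations T_h u = min(max(u,−h),h) and R_h u = u − T_h u). Then α_{n,p}^p (∫_{S^{n−1}} (A_ξ + B_ξ)^{−n/p} dσ(ξ))^{−p/n} ≥ α_{n,p}^p (∫_{S^{n−1}} A_ξ^{−n/p} dσ(ξ))^{−p/n} + α_{n,p}^p (∫_{S^{n−1}} B_ξ^{−n/p} dσ(ξ))^{−p/n};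 that is, E_{p,Ω}(u)^p ≥ E_{p,Ω}(T_h u)^p + E_{p,Ω}(R_h u)^p. -/
open MeasureTheory Metric Filter
open scoped ENNReal RealInnerProductSpace NNReal

noncomputable section

/-- `F ↦ ((∫_{S^{n-1}} F(ξ)^{-n/p} dσ(ξ))^{-p/n}`, with the conventions
`0^{-n/p} = +∞` and `(+∞)^{-p/n} = 0` built into `ENNReal.rpow`. -/
def sphJ (n : ℕ) (p : ℝ) (F : unitSphere n → ℝ) : ℝ :=
  ((∫⁻ ξ, ENNReal.ofReal (F ξ) ^ (-((n : ℝ) / p)) ∂(sphereMeasure n)) ^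
    (-(p / (n : ℝ)))).toReal

/-!
For `q = -n/p < 0`, `sphJ n p F` is the `L^q` quasi-norm `‖F‖_q = (∫ F^q dσ)^{1/q}`, and the
claim is the reverse Minkowski inequality `‖A‖_q + ‖B‖_q ≤ ‖A + B‖_q`. Convexity of `t ↦ t^{1-q}`
at the points `a/x`, `b/y` with weights `x/(x+y)`, `y/(x+y)` gives the pointwise bound
`(a + b)^{1-q} (x + y)^q ≤ a^{1-q} x^q + b^{1-q} y^q`. Taking `a = ‖A‖_q`, `b = ‖B‖_q` and
integrating, the right-hand side becomes `a + b`, so `∫ (A + B)^q ≤ (a + b)^q`.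
-/

theorem Real.mul_div_rpow_one_sub {r a x : ℝ} (ha : 0 ≤ a) (hx : 0 < x) :
    x * (a / x) ^ (1 - r) = a ^ (1 - r) * x ^ r := by
  rw [Real.div_rpow ha hx.le, Real.rpow_sub hx, Real.rpow_one]
  field_simp

theorem Real.add_rpow_one_sub_mul_add_rpow_le {r a b x y : ℝ} (hr : r ≤ 0)
    (ha : 0 ≤ a) (hb : 0 ≤ b) (hx : 0 < x) (hy : 0 < y) :
    (a + b) ^ (1 - r) * (x + y) ^ r ≤ a ^ (1 - r) * x ^ r + b ^ (1 - r) * y ^ r := by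
  have hxy : 0 < x + y := by positivity
  have hconv := (convexOn_rpow (p := 1 - r) (by linarith)).2
    (div_nonneg ha hx.le) (div_nonneg hb hy.le) (div_pos hx hxy).le (div_pos hy hxy).le
    (by field_simp)
  simp only [smul_eq_mul] at hconv
  calc (a + b) ^ (1 - r) * (x + y) ^ r
      = (x + y) * ((a + b) / (x + y)) ^ (1 - r) :=
        (Real.mul_div_rpow_one_sub (by positivity) hxy).symm
    _ = (x + y) * (x / (x + y) * (a / x) + y / (x + y) * (b / y)) ^ (1 - r) := by
        congr 2; field_simp
    _ ≤ (x + y) * (x / (x + y) * (a / x) ^ (1 - r) + y / (x + y) * (b / y) ^ (1 - r)) :=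
        mul_le_mul_of_nonneg_left hconv hxy.le
    _ = x * (a / x) ^ (1 - r) + y * (b / y) ^ (1 - r) := by field_simp
    _ = a ^ (1 - r) * x ^ r + b ^ (1 - r) * y ^ r := by
        rw [Real.mul_div_rpow_one_sub ha hx, Real.mul_div_rpow_one_sub hb hy]

namespace ENNReal

theorem rpow_le_rpow_of_nonpos {x y : ℝ≥0∞} {z : ℝ} (hxy : x ≤ y) (hz : z ≤ 0) :
    y ^ z ≤ x ^ z := by
  rw [← neg_neg z, rpow_neg y, rpow_neg x]
  exact ENNReal.inv_le_inv.2 (rpow_le_rpow hxy (neg_nonneg.2 hz))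

theorem add_rpow_one_sub_mul_add_rpow_le {r : ℝ} (hr : r < 0) {a b : ℝ≥0∞}
    (ha₀ : a ≠ 0) (ha : a ≠ ∞) (hb₀ : b ≠ 0) (hb : b ≠ ∞) (x y : ℝ≥0∞) :
    (a + b) ^ (1 - r) * (x + y) ^ r ≤ a ^ (1 - r) * x ^ r + b ^ (1 - r) * y ^ r := by
  have h1r : 0 ≤ 1 - r := by linarith
  have hpos : ∀ c : ℝ≥0∞, c ≠ 0 → c ^ (1 - r) ≠ 0 := fun c hc =>
    (rpow_pos_of_nonneg (pos_iff_ne_zero.2 hc) h1r).ne'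
  rcases eq_or_ne x 0 with rfl | hx₀
  · simp [zero_rpow_of_neg hr, mul_top (hpos a ha₀)]
  rcases eq_or_ne y 0 with rfl | hy₀
  · simp [zero_rpow_of_neg hr, mul_top (hpos b hb₀)]
  rcases eq_or_ne (x + y) ∞ with hxy | hxy
  · simp [hxy, top_rpow_of_neg hr]
  obtain ⟨hx, hy⟩ := add_ne_top.1 hxy
  lift a to ℝ≥0 using ha
  lift b to ℝ≥0 using hb
  lift x to ℝ≥0 using hx
  lift y to ℝ≥0 using hy
  have hx' : x ≠ 0 := by exact_mod_cast hx₀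
  have hy' : y ≠ 0 := by exact_mod_cast hy₀
  rw [← coe_add, ← coe_add, ← coe_rpow_of_nonneg _ h1r, ← coe_rpow_of_nonneg _ h1r,
    ← coe_rpow_of_nonneg _ h1r, ← coe_rpow_of_ne_zero hx', ← coe_rpow_of_ne_zero hy',
    ← coe_rpow_of_ne_zero (by positivity)]
  norm_cast
  rw [← NNReal.coe_le_coe]
  push_cast
  exact Real.add_rpow_one_sub_mul_add_rpow_le hr.le a.2 b.2 (by positivity) (by positivity)

end ENNReal

section NegativeExponent

variable {α : Type*} [MeasurableSpace α] {μ : Measure α} {q : ℝ} {f g : α → ℝ≥0∞}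

theorem eLpNorm'_eq_lintegral_rpow (f : α → ℝ≥0∞) (q : ℝ) (μ : Measure α) :
    eLpNorm' f q μ = (∫⁻ x, f x ^ q ∂μ) ^ (1 / q) := by
  simp [eLpNorm'_eq_lintegral_enorm]

theorem lintegral_rpow_eq_eLpNorm'_rpow (hq : q ≠ 0) (f : α → ℝ≥0∞) :
    ∫⁻ x, f x ^ q ∂μ = eLpNorm' f q μ ^ q := by
  rw [eLpNorm'_eq_lintegral_rpow, ← ENNReal.rpow_mul, one_div_mul_cancel hq, ENNReal.rpow_one]

theorem eLpNorm'_mono_of_neg (hq : q < 0) (hfg : f ≤ g) : eLpNorm' f q μ ≤ eLpNorm' g q μ := by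
  rw [eLpNorm'_eq_lintegral_rpow, eLpNorm'_eq_lintegral_rpow]
  refine ENNReal.rpow_le_rpow_of_nonpos (lintegral_mono fun x => ?_) (one_div_neg.2 hq).le
  exact ENNReal.rpow_le_rpow_of_nonpos (hfg x) hq.le

theorem rpow_one_sub_mul_lintegral_add_rpow_le (hq : q < 0) (hf : AEMeasurable f μ)
    {a b : ℝ≥0∞} (ha₀ : a ≠ 0) (ha : a ≠ ∞) (hb₀ : b ≠ 0) (hb : b ≠ ∞) :
    (a + b) ^ (1 - q) * ∫⁻ x, (f x + g x) ^ q ∂μ ≤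
      a ^ (1 - q) * ∫⁻ x, f x ^ q ∂μ + b ^ (1 - q) * ∫⁻ x, g x ^ q ∂μ := by
  have hpow_top : ∀ c : ℝ≥0∞, c ≠ ∞ → c ^ (1 - q) ≠ ∞ := fun c h =>
    ENNReal.rpow_ne_top_of_nonneg (by linarith) h
  calc (a + b) ^ (1 - q) * ∫⁻ x, (f x + g x) ^ q ∂μ
      = ∫⁻ x, (a + b) ^ (1 - q) * (f x + g x) ^ q ∂μ :=
        (lintegral_const_mul' _ _ (hpow_top _ (ENNReal.add_ne_top.2 ⟨ha, hb⟩))).symm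
    _ ≤ ∫⁻ x, (a ^ (1 - q) * f x ^ q + b ^ (1 - q) * g x ^ q) ∂μ :=
        lintegral_mono fun x =>
          ENNReal.add_rpow_one_sub_mul_add_rpow_le hq ha₀ ha hb₀ hb (f x) (g x)
    _ = a ^ (1 - q) * ∫⁻ x, f x ^ q ∂μ + b ^ (1 - q) * ∫⁻ x, g x ^ q ∂μ := by
        rw [lintegral_add_left' ((hf.pow_const q).const_mul _),
          lintegral_const_mul' _ _ (hpow_top a ha), lintegral_const_mul' _ _ (hpow_top b hb)]

theorem eLpNorm'_add_eLpNorm'_le_of_neg (hq : q < 0) (hf : AEMeasurable f μ) :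
    eLpNorm' f q μ + eLpNorm' g q μ ≤ eLpNorm' (f + g) q μ := by
  set a := eLpNorm' f q μ
  set b := eLpNorm' g q μ
  have hac : a ≤ eLpNorm' (f + g) q μ := eLpNorm'_mono_of_neg hq fun x => le_self_add
  have hbc : b ≤ eLpNorm' (f + g) q μ := eLpNorm'_mono_of_neg hq fun x => le_add_self
  rcases eq_or_ne (eLpNorm' (f + g) q μ) ∞ with hc | hc
  · exact hc ▸ le_top
  rcases eq_or_ne a 0 with ha₀ | ha₀
  · simpa [ha₀] using hbc
  rcases eq_or_ne b 0 with hb₀ | hb₀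
  · simpa [hb₀] using hac
  have ha : a ≠ ∞ := ne_top_of_le_ne_top hc hac
  have hb : b ≠ ∞ := ne_top_of_le_ne_top hc hbc
  have hab₀ : a + b ≠ 0 := by simp [ha₀]
  have hab : a + b ≠ ∞ := ENNReal.add_ne_top.2 ⟨ha, hb⟩
  have hsplit : ∀ c : ℝ≥0∞, c ≠ 0 → c ≠ ∞ → c ^ (1 - q) * c ^ q = c := fun c h₀ h => by
    rw [← ENNReal.rpow_add _ _ h₀ h, sub_add_cancel, ENNReal.rpow_one]
  have hint : ∫⁻ x, (f + g) x ^ q ∂μ ≤ (a + b) ^ q := by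
    refine (ENNReal.mul_le_mul_iff_right (a := (a + b) ^ (1 - q))
      (ENNReal.rpow_pos_of_nonneg (pos_iff_ne_zero.2 hab₀) (by linarith)).ne'
      (ENNReal.rpow_ne_top_of_nonneg (by linarith) hab)).1 ?_
    calc (a + b) ^ (1 - q) * ∫⁻ x, (f + g) x ^ q ∂μ
        ≤ a ^ (1 - q) * ∫⁻ x, f x ^ q ∂μ + b ^ (1 - q) * ∫⁻ x, g x ^ q ∂μ :=
          rpow_one_sub_mul_lintegral_add_rpow_le hq hf ha₀ ha hb₀ hb
      _ = (a + b) ^ (1 - q) * (a + b) ^ q := by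
          rw [lintegral_rpow_eq_eLpNorm'_rpow hq.ne, lintegral_rpow_eq_eLpNorm'_rpow hq.ne,
            hsplit a ha₀ ha, hsplit b hb₀ hb, hsplit _ hab₀ hab]
  calc a + b = ((a + b) ^ q) ^ (1 / q) := by
        rw [← ENNReal.rpow_mul, mul_one_div_cancel hq.ne, ENNReal.rpow_one]
    _ ≤ eLpNorm' (f + g) q μ := by
        rw [eLpNorm'_eq_lintegral_rpow]
        exact ENNReal.rpow_le_rpow_of_nonpos hint (one_div_neg.2 hq).le

theorem eLpNorm'_ne_top_of_neg (hq : q < 0) (hμ : μ ≠ 0) (hf : AEMeasurable f μ)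
    (hf_top : ∀ x, f x ≠ ∞) : eLpNorm' f q μ ≠ ∞ := by
  have hint : ∫⁻ x, f x ^ q ∂μ ≠ 0 := by
    rw [Ne, lintegral_eq_zero_iff' (hf.pow_const q)]
    intro h
    refine hμ (ae_eq_bot.1 (eventually_false_iff_eq_bot.1 ?_))
    filter_upwards [h] with x hx
    simp [ENNReal.rpow_eq_zero_iff, hf_top x, hq.not_gt] at hx
  simp [eLpNorm'_eq_lintegral_rpow, ENNReal.rpow_eq_top_iff, hint, hq.not_gt]

theorem toReal_eLpNorm'_add_toReal_eLpNorm'_le_of_neg (hq : q < 0) (hf : AEMeasurable f μ)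
    (hg : AEMeasurable g μ) (hf_top : ∀ x, f x ≠ ∞) (hg_top : ∀ x, g x ≠ ∞) :
    (eLpNorm' f q μ).toReal + (eLpNorm' g q μ).toReal ≤ (eLpNorm' (f + g) q μ).toReal := by
  rcases eq_or_ne μ 0 with rfl | hμ
  · simp [eLpNorm'_measure_zero_of_neg hq]
  have hsum := eLpNorm'_add_eLpNorm'_le_of_neg (g := g) hq hf
  have htop := eLpNorm'_ne_top_of_neg hq hμ (hf.add hg) fun x =>
    ENNReal.add_ne_top.2 ⟨hf_top x, hg_top x⟩
  obtain ⟨ha, hb⟩ := ENNReal.add_ne_top.1 (ne_top_of_le_ne_top htop hsum)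
  rw [← ENNReal.toReal_add ha hb]
  exact ENNReal.toReal_mono htop hsum

end NegativeExponent

theorem measurable_integral_rpow_abs_fderiv_apply {E : Type*} [NormedAddCommGroup E]
    [NormedSpace ℝ E] [SecondCountableTopology E] [MeasurableSpace E] [OpensMeasurableSpace E]
    (μ : Measure E) [SFinite μ] (u : E → ℝ) (p : ℝ) :
    Measurable fun v : E => ∫ x, |fderiv ℝ u x v| ^ p ∂μ := by
  have h : Measurable fun z : E × E => |fderiv ℝ u z.2 z.1| ^ p :=
    ((ContinuousLinearMap.measurable_apply₂.comp
      ((measurable_fderiv ℝ u).comp measurable_snd |>.prodMk measurable_fst)).abs).pow_const p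
  exact h.stronglyMeasurable.integral_prod_right'.measurable

theorem sphJ_eq_toReal_eLpNorm' (n : ℕ) (p : ℝ) (F : unitSphere n → ℝ) :
    sphJ n p F =
      (eLpNorm' (fun ξ => ENNReal.ofReal (F ξ)) (-((n : ℝ) / p)) (sphereMeasure n)).toReal := by
  rw [sphJ, eLpNorm'_eq_lintegral_rpow, one_div, inv_neg, inv_div]

theorem alphanp_nonneg (n : ℕ) (p : ℝ) (e₁ : En n) : 0 ≤ alphanp n p e₁ :=
  mul_nonneg (Real.rpow_nonneg (by unfold nOmega; positivity) _)
    (Real.rpow_nonneg (integral_nonneg fun _ => by positivity) _)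

theorem statement5_general (n : ℕ) (p : ℝ) (hp : 1 ≤ p) (hpn : p < n)
    (Ω : Set (En n)) (e₁ : En n) (u : En n → ℝ) (h : ℝ) :
    alphanp n p e₁ ^ p *
        sphJ n p (fun ξ =>
          (∫ x in Ω ∩ {x | |u x| ≤ h}, |fderiv ℝ u x (ξ : En n)| ^ p) +
            ∫ x in Ω ∩ {x | h < |u x|}, |fderiv ℝ u x (ξ : En n)| ^ p) ≥
      alphanp n p e₁ ^ p *
          sphJ n p (fun ξ => ∫ x in Ω ∩ {x | |u x| ≤ h}, |fderiv ℝ u x (ξ : En n)| ^ p) +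
        alphanp n p e₁ ^ p *
          sphJ n p (fun ξ => ∫ x in Ω ∩ {x | h < |u x|}, |fderiv ℝ u x (ξ : En n)| ^ p) := by
  set A : unitSphere n → ℝ := fun ξ => ∫ x in Ω ∩ {x | |u x| ≤ h}, |fderiv ℝ u x ξ| ^ p
  set B : unitSphere n → ℝ := fun ξ => ∫ x in Ω ∩ {x | h < |u x|}, |fderiv ℝ u x ξ| ^ p
  have hq : -((n : ℝ) / p) < 0 := neg_neg_of_pos (div_pos (by linarith) (by linarith))
  have hA : Measurable A :=
    (measurable_integral_rpow_abs_fderiv_apply _ u p).comp measurable_subtype_coe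
  have hB : Measurable B :=
    (measurable_integral_rpow_abs_fderiv_apply _ u p).comp measurable_subtype_coe
  have hAB : (fun ξ => ENNReal.ofReal (A ξ + B ξ)) =
      (fun ξ => ENNReal.ofReal (A ξ)) + fun ξ => ENNReal.ofReal (B ξ) :=
    funext fun ξ => ENNReal.ofReal_add (integral_nonneg fun _ => by positivity)
      (integral_nonneg fun _ => by positivity)
  rw [ge_iff_le, ← mul_add]
  refine mul_le_mul_of_nonneg_left ?_ (Real.rpow_nonneg (alphanp_nonneg n p e₁) p)
  rw [sphJ_eq_toReal_eLpNorm', sphJ_eq_toReal_eLpNorm', sphJ_eq_toReal_eLpNorm', hAB]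
  exact toReal_eLpNorm'_add_toReal_eLpNorm'_le_of_neg hq hA.ennreal_ofReal.aemeasurable
    hB.ennreal_ofReal.aemeasurable (fun _ => ENNReal.ofReal_ne_top) fun _ => ENNReal.ofReal_ne_top

/-- Proposition 5 (superadditivity of the affine energy under truncation):
with `A_ξ = Ψ_ξ(T_h u)` and `B_ξ = Ψ_ξ(R_h u)` one has
`E_{p,Ω}(u)^p ≥ E_{p,Ω}(T_h u)^p + E_{p,Ω}(R_h u)^p`. -/
theorem statement5 (n : ℕ) (hn : 2 ≤ n) (p : ℝ) (hp : 1 ≤ p) (hpn : p < n)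
    (Ω : Set (En n)) (hΩo : IsOpen Ω) (hΩb : Bornology.IsBounded Ω)
    (e₁ : En n) (he₁ : ‖e₁‖ = 1)
    (u : En n → ℝ) (hu : ContDiff ℝ 1 u) (hcs : HasCompactSupport u)
    (hsupp : tsupport u ⊆ Ω) (h : ℝ) (hh : 0 < h) :
    alphanp n p e₁ ^ p *
        sphJ n p (fun ξ =>
          (∫ x in Ω ∩ {x | |u x| ≤ h}, |fderiv ℝ u x (ξ : En n)| ^ p) +
            ∫ x in Ω ∩ {x | h < |u x|}, |fderiv ℝ u x (ξ : En n)| ^ p) ≥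
      alphanp n p e₁ ^ p *
          sphJ n p (fun ξ => ∫ x in Ω ∩ {x | |u x| ≤ h}, |fderiv ℝ u x (ξ : En n)| ^ p) +
        alphanp n p e₁ ^ p *
          sphJ n p (fun ξ => ∫ x in Ω ∩ {x | h < |u x|}, |fderiv ℝ u x (ξ : En n)| ^ p) :=
  statement5_general n p hp hpn Ω e₁ u h
end
end
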